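/- The potential φ(v_i) = d^i(V,v) neutralizes all the exit arcs in the remote-set layered construction: if v is not in the negative i-hop reach of U for any i ≤ h, and (x,v) is an edge of G with ℓ(x,v) ≥ 0, then for every layer i, d^i(V,x) + ℓ(x,v) − d^0(V,v) ≥ 0. -/
import Mathlib


open Classical

variable {V : Type*}

/-- `IsWalk E s t p`: `p` is the list of successive vertices (after `s`) of a walk
from `s` to `t` in the directed graph with edge relation `E`. -/
def IsWalk (E : V → V → Prop) : V → V → List V → Prop
  | s, t, [] => s = t
  | s, t, v :: p => E s v ∧ IsWalk E v t p

/-- Length of a walk: sum of edge lengths. -/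
noncomputable def walkLen (ℓ : V → V → ℝ) : V → List V → ℝ
  | _, [] => 0
  | s, v :: p => ℓ s v + walkLen ℓ v p

/-- Number of hops of a walk: number of designated (negative) edges, with multiplicity. -/
noncomputable def hopCount (neg : V → V → Prop) : V → List V → ℕ
  | _, [] => 0
  | s, v :: p => (if neg s v then 1 else 0) + hopCount neg v p

/-- `h`-hop distance: infimum length over walks from `s` to `t` with at most `h` hops. -/
noncomputable def hopDist (E : V → V → Prop) (ℓ : V → V → ℝ) (neg : V → V → Prop)
    (h : ℕ) (s t : V) : EReal :=
  ⨅ p ∈ {p : List V | IsWalk E s t p ∧ hopCount neg s p ≤ h}, (walkLen ℓ s p : EReal)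

/-- Distance: infimum length over all walks from `s` to `t`. -/
noncomputable def walkDist (E : V → V → Prop) (ℓ : V → V → ℝ) (s t : V) : EReal :=
  ⨅ p ∈ {p : List V | IsWalk E s t p}, (walkLen ℓ s p : EReal)

lemma isWalk_append {E : V → V → Prop} :
    ∀ {s t u : V} {p : List V}, IsWalk E s t p → E t u → IsWalk E s u (p ++ [u])
  | s, t, u, [], hw, he => by
      cases hw; exact ⟨he, rfl⟩
  | s, t, u, a :: p, hw, he => ⟨hw.1, isWalk_append hw.2 he⟩

lemma walkLen_append {E : V → V → Prop} (ℓ : V → V → ℝ) :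
    ∀ {s t u : V} {p : List V}, IsWalk E s t p →
      walkLen ℓ s (p ++ [u]) = walkLen ℓ s p + ℓ t u
  | s, t, u, [], hw => by cases hw; simp [walkLen]
  | s, t, u, a :: p, hw => by
      show ℓ s a + walkLen ℓ a (p ++ [u]) = ℓ s a + walkLen ℓ a p + ℓ t u
      rw [walkLen_append ℓ hw.2]; ring

lemma hopCount_append {E : V → V → Prop} (neg : V → V → Prop) :
    ∀ {s t u : V} {p : List V}, IsWalk E s t p →
      hopCount neg s (p ++ [u]) = hopCount neg s p + (if neg t u then 1 else 0)
  | s, t, u, [], hw => by cases hw; simp [hopCount]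
  | s, t, u, a :: p, hw => by
      show (if neg s a then 1 else 0) + hopCount neg a (p ++ [u])
        = ((if neg s a then 1 else 0) + hopCount neg a p) + (if neg t u then 1 else 0)
      rw [hopCount_append neg hw.2]; ring

/-- If a walk has negative length, a suffix starting at the tail of a negative edge
has length at most that of the walk and no more hops. -/
lemma neg_suffix {E : V → V → Prop} (ℓ : V → V → ℝ) :
    ∀ (s : V) (p : List V) {t : V}, IsWalk E s t p → walkLen ℓ s p < 0 →
      ∃ u b q, ℓ u b < 0 ∧ E u b ∧ IsWalk E u t (b :: q) ∧
        hopCount (fun a b => ℓ a b < 0) u (b :: q) ≤ hopCount (fun a b => ℓ a b < 0) s p ∧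
        walkLen ℓ u (b :: q) ≤ walkLen ℓ s p
  | s, [], t, hw, hl => by simp [walkLen] at hl
  | s, a :: p, t, hw, hl => by
      by_cases hsa : ℓ s a < 0
      · exact ⟨s, a, p, hsa, hw.1, hw, le_refl _, le_refl _⟩
      · push_neg at hsa
        have hl' : walkLen ℓ a p < 0 := by
          have : walkLen ℓ s (a :: p) = ℓ s a + walkLen ℓ a p := rfl
          linarith [this ▸ hl]
        obtain ⟨u, b, q, h1, h3, h4, h5, h6⟩ := neg_suffix ℓ a p hw.2 hl'
        refine ⟨u, b, q, h1, h3, h4, ?_, ?_⟩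
        · exact h5.trans (Nat.le_add_left _ _)
        · have : walkLen ℓ s (a :: p) = ℓ s a + walkLen ℓ a p := rfl
          rw [this]; linarith

/-- The potential `φ(v_i) = d^i(V,v)` neutralizes the exit arcs of the remote-set
layered construction: if the negative edges of `G` are exactly those with tails in
`U`, and `v` is not in the negative `i`-hop reach of `U` for any `i ≤ h`, then for
every nonnegative edge `(x,v)` and every layer `i ≤ h`,
`d^i(V,x) + ℓ(x,v) - d^0(V,v) ≥ 0`. -/
theorem exit_arcs_neutralized
    {V : Type*} (E : V → V → Prop) (ℓ : V → V → ℝ) (U : Set V) (h : ℕ) (v : V)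
    (D : ℕ → V → ℝ)
    (hD : ∀ (i : ℕ) (x : V),
      (⨅ w : V, hopDist E ℓ (fun a b => ℓ a b < 0) i w x) = (D i x : EReal))
    (hneg : ∀ a b, E a b → (ℓ a b < 0 ↔ a ∈ U))
    (hreach : ∀ i ≤ h, ∀ u ∈ U, ∀ p : List V, IsWalk E u v p →
      hopCount (fun a b => ℓ a b < 0) u p ≤ i → 0 ≤ walkLen ℓ u p) :
    ∀ i ≤ h, ∀ x : V, E x v → 0 ≤ ℓ x v → 0 ≤ D i x + ℓ x v - D 0 v := by
  intro i hi x hE hlnn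
  have hD0 : D 0 v ≤ 0 := by
    have h1 : (⨅ w : V, hopDist E ℓ (fun a b => ℓ a b < 0) 0 w v) ≤ ((0:ℝ) : EReal) := by
      refine le_trans (iInf_le _ v) ?_
      have hmem : ([] : List V) ∈ {p : List V | IsWalk E v v p ∧
          hopCount (fun a b => ℓ a b < 0) v p ≤ 0} := ⟨rfl, le_refl _⟩
      have := iInf₂_le (f := fun p _ => ((walkLen ℓ v p : ℝ) : EReal)) ([] : List V) hmem
      simpa [hopDist, walkLen] using this
    rw [hD 0 v] at h1
    exact_mod_cast h1
  have hDi : -ℓ x v ≤ D i x := by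
    have h2 : ((-ℓ x v : ℝ) : EReal) ≤ ⨅ w : V, hopDist E ℓ (fun a b => ℓ a b < 0) i w x := by
      refine le_iInf fun w => ?_
      refine le_iInf₂ fun p hp => ?_
      obtain ⟨hpw, hpc⟩ := hp
      have key : 0 ≤ walkLen ℓ w p + ℓ x v := by
        by_contra hneg'
        push_neg at hneg'
        have hw' : IsWalk E w v (p ++ [v]) := isWalk_append hpw hE
        have hlen : walkLen ℓ w (p ++ [v]) = walkLen ℓ w p + ℓ x v :=
          walkLen_append ℓ hpw
        have hhop : hopCount (fun a b => ℓ a b < 0) w (p ++ [v])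
            = hopCount (fun a b => ℓ a b < 0) w p := by
          rw [hopCount_append (fun a b => ℓ a b < 0) hpw, if_neg (not_lt.2 hlnn)]
          omega
        have hneg2 : walkLen ℓ w (p ++ [v]) < 0 := by rw [hlen]; exact hneg'
        obtain ⟨u, b, q, h1, h3, h4, h5, h6⟩ := neg_suffix ℓ w (p ++ [v]) hw' hneg2
        have hu : u ∈ U := (hneg u b h3).1 h1
        have hq : 0 ≤ walkLen ℓ u (b :: q) :=
          hreach i hi u hu (b :: q) h4 (le_trans h5 (hhop ▸ hpc))
        linarith
      exact EReal.coe_le_coe_iff.2 (by linarith)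
    rw [hD i x] at h2
    exact_mod_cast h2
  linarith
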